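/- Let μ > 0 and let f: [0,∞) → ℝ be given by f(r) = -[ω_μ(r) + (1/2)ω_μ(r)²] with ω_μ(r) = log(8μ²/(μ²+r²)²). Then D¹_μ := 8∫₀^∞ t (t²-1)/(t²+1)³ f(μt) dt = 4 log 8 − 8 − 8 log μ. -/

import Mathlib

noncomputable section
open MeasureTheory Real

/-- `ω_μ(r) = log(8μ²/(μ²+r²)²)`. -/
def omega (μ r : ℝ) : ℝ := Real.log (8 * μ ^ 2 / (μ ^ 2 + r ^ 2) ^ 2)

/-!
Scaling gives `ω_μ(μt) = c - 2 log(1+t²)` with `c = log 8 - 2 log μ`. In the variable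
`u = 1 + t²` the measure `t(t²-1)/(t²+1)³ dt` becomes `(u-2)/(2u³) du`, and the integrand has the
explicit primitive `F(u) = (w²/4 - w/2 + 1)/u - w²/(4u²)`, `w = c - 2 log u`, which vanishes at
infinity. Hence the integral is `-F(1) = c/2 - 1`. Integrability follows from `log u ≤ 4 u^{1/4}`,
which bounds the integrand by a multiple of `1/(1+t²)`.
-/

namespace D1

open Filter Set Asymptotics Topology

lemma omega_mul_right {μ : ℝ} (hμ : 0 < μ) (t : ℝ) :
    omega μ (μ * t) = log 8 - 2 * log μ - 2 * log (1 + t ^ 2) := by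
  have h : μ ^ 2 + (μ * t) ^ 2 = μ ^ 2 * (1 + t ^ 2) := by ring
  rw [omega, h, mul_pow, log_div (by positivity) (by positivity),
    log_mul (by norm_num) (by positivity), log_mul (by positivity) (by positivity)]
  simp only [log_pow]
  push_cast
  ring

def primitive (c u : ℝ) : ℝ :=
  ((c - 2 * log u) ^ 2 / 4 - (c - 2 * log u) / 2 + 1) / u - (c - 2 * log u) ^ 2 / (4 * u ^ 2)

lemma hasDerivAt_primitive (c : ℝ) {u : ℝ} (hu : 0 < u) :
    HasDerivAt (primitive c)
      ((u - 2) / (2 * u ^ 3) * -((c - 2 * log u) + 1 / 2 * (c - 2 * log u) ^ 2)) u := by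
  have hw : HasDerivAt (fun u => c - 2 * log u) (-(2 * u⁻¹)) u :=
    ((hasDerivAt_log hu.ne').const_mul 2).const_sub c
  have h := ((((hw.pow 2).div_const 4).sub (hw.div_const 2)).add_const 1).div (hasDerivAt_id u)
    hu.ne' |>.sub ((hw.pow 2).div ((hasDerivAt_pow 2 u).const_mul 4) (by positivity))
  refine h.congr_deriv ?_
  simp only [id, Pi.pow_apply, Pi.sub_apply]
  field_simp
  ring

lemma tendsto_pow_div_atTop (c : ℝ) (k : ℕ) :
    Tendsto (fun u => (c - 2 * log u) ^ k / u) atTop (𝓝 0) := by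
  have hw : (fun u => c - 2 * log u) =O[atTop] log :=
    isLittleO_const_log_atTop.isBigO.sub ((isBigO_refl _ _).const_mul_left 2)
  exact ((hw.pow k).trans_isLittleO isLittleO_pow_log_id_atTop).tendsto_div_nhds_zero

lemma tendsto_primitive_atTop (c : ℝ) : Tendsto (primitive c) atTop (𝓝 0) := by
  have h0 := tendsto_pow_div_atTop c 0
  have h1 := tendsto_pow_div_atTop c 1
  have h2 := tendsto_pow_div_atTop c 2
  have h := ((h2.div_const 4).sub (h1.div_const 2)).add h0 |>.sub ((h2.mul h0).div_const 4)
  simp only [zero_div, sub_zero, add_zero, mul_zero] at h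
  refine h.congr' ?_
  filter_upwards [eventually_gt_atTop 0] with u hu
  simp only [primitive, pow_zero, pow_one]
  field_simp

def integrand (c t : ℝ) : ℝ :=
  t * (t ^ 2 - 1) / (t ^ 2 + 1) ^ 3 *
    -((c - 2 * log (1 + t ^ 2)) + 1 / 2 * (c - 2 * log (1 + t ^ 2)) ^ 2)

lemma hasDerivAt_primitive_one_add_sq (c t : ℝ) :
    HasDerivAt (fun t => primitive c (1 + t ^ 2)) (integrand c t) t := by
  have h := (hasDerivAt_primitive c (by positivity : 0 < 1 + t ^ 2)).comp t
    ((hasDerivAt_pow 2 t).const_add 1)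
  refine h.congr_deriv ?_
  have : t ^ 2 + 1 ≠ 0 := by positivity
  simp only [integrand]
  field_simp
  ring

lemma log_sq_le_sqrt {u : ℝ} (hu : 1 ≤ u) : log u ^ 2 ≤ 16 * √u := by
  have hq : log u = 4 * log √√u := by
    rw [log_sqrt (sqrt_nonneg u), log_sqrt (by linarith)]; ring
  have hle : log √√u ≤ √√u := (log_le_sub_one_of_pos (by positivity)).trans (by linarith)
  have h0 : 0 ≤ log √√u := log_nonneg (one_le_sqrt.2 (one_le_sqrt.2 hu))
  calc log u ^ 2 = 16 * log √√u ^ 2 := by rw [hq]; ring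
    _ ≤ 16 * √√u ^ 2 := by gcongr
    _ = 16 * √u := by rw [sq_sqrt (sqrt_nonneg u)]

lemma abs_neg_add_half_sq_le (c : ℝ) {u : ℝ} (hu : 1 ≤ u) :
    |-((c - 2 * log u) + 1 / 2 * (c - 2 * log u) ^ 2)| ≤ (2 * c ^ 2 + 129) * √u := by
  set w := c - 2 * log u
  have hw : |w + 1 / 2 * w ^ 2| ≤ 1 / 2 + w ^ 2 := by
    rw [abs_le]; constructor <;> nlinarith [sq_nonneg (w + 1), sq_nonneg (w - 1)]
  have hw2 : w ^ 2 ≤ 2 * c ^ 2 + 8 * log u ^ 2 := by nlinarith [sq_nonneg (c + 2 * log u)]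
  have h1 : 1 ≤ √u := one_le_sqrt.2 hu
  rw [abs_neg]
  nlinarith [log_sq_le_sqrt hu, sq_nonneg c]

lemma abs_integrand_le (c t : ℝ) : |integrand c t| ≤ (2 * c ^ 2 + 129) * (1 + t ^ 2)⁻¹ := by
  set u := 1 + t ^ 2
  have hu : 1 ≤ u := by simp only [u]; nlinarith [sq_nonneg t]
  have ht : |t| ≤ √u := by rw [← sqrt_sq_eq_abs]; exact sqrt_le_sqrt (by simp only [u]; linarith)
  have hweight : |t * (t ^ 2 - 1) / (t ^ 2 + 1) ^ 3| ≤ √u / u ^ 2 := by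
    rw [show t ^ 2 + 1 = u by ring, abs_div, abs_mul, abs_of_pos (by positivity : 0 < u ^ 3),
      div_le_div_iff₀ (by positivity) (by positivity)]
    have : |t ^ 2 - 1| ≤ u := by rw [abs_le]; constructor <;> nlinarith [sq_nonneg t]
    calc |t| * |t ^ 2 - 1| * u ^ 2 ≤ √u * u * u ^ 2 := by gcongr
      _ = √u * u ^ 3 := by ring
  rw [integrand, abs_mul]
  calc _ ≤ √u / u ^ 2 * ((2 * c ^ 2 + 129) * √u) :=
        mul_le_mul hweight (abs_neg_add_half_sq_le c hu) (abs_nonneg _) (by positivity)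
    _ = (2 * c ^ 2 + 129) * (√u * √u) / u ^ 2 := by ring
    _ = _ := by
        rw [mul_self_sqrt (by linarith)]
        field_simp

lemma integrable_integrand (c : ℝ) : Integrable (integrand c) := by
  refine (integrable_inv_one_add_sq.const_mul (2 * c ^ 2 + 129)).mono' ?_
    (Eventually.of_forall fun t => (norm_eq_abs _).trans_le (abs_integrand_le c t))
  unfold integrand
  fun_prop

lemma integral_integrand (c : ℝ) : ∫ t in Ioi 0, integrand c t = c / 2 - 1 := by
  rw [integral_Ioi_of_hasDerivAt_of_tendsto' (fun t _ => hasDerivAt_primitive_one_add_sq c t)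
    (integrable_integrand c).integrableOn
    ((tendsto_primitive_atTop c).comp (tendsto_atTop_add_const_left _ _
      (tendsto_pow_atTop two_ne_zero)))]
  rw [zero_pow two_ne_zero, add_zero, primitive, log_one]
  ring

end D1

/-- With `f(r) = -[ω_μ(r) + (1/2)ω_μ(r)²]`, one has
`D¹_μ = 8∫₀^∞ t (t²-1)/(t²+1)³ f(μt) dt = 4 log 8 − 8 − 8 log μ`. -/
theorem statement8 (μ : ℝ) (hμ : 0 < μ) :
    8 * (∫ t in Set.Ioi (0:ℝ),
        t * (t ^ 2 - 1) / (t ^ 2 + 1) ^ 3 *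
          (-(omega μ (μ * t) + (1 / 2) * (omega μ (μ * t)) ^ 2)))
      = 4 * Real.log 8 - 8 - 8 * Real.log μ := by
  simp only [D1.omega_mul_right hμ]
  calc _ = 8 * ((log 8 - 2 * log μ) / 2 - 1) := congrArg (8 * ·) (D1.integral_integrand _)
    _ = _ := by ring
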